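/- arXiv:2603.29959 — 3 statements merged into one kernel-verified Lean document; each statement's English description precedes it below -/
import Mathlib

section
/- Let G be a real q×q matrix with He(G) := G + Gᵀ positive definite. Let Q be a symmetric n×n matrix, N a p×q matrix, X an n×p matrix, and Y a q×n matrix. If the block matrix [[Q, X N + Yᵀ Gᵀ], [Nᵀ Xᵀ + G Y, −He(G)]] is negative definite, then Q + He(X N Y) = Q + X N Y + Yᵀ Nᵀ Xᵀ is negative definite. -/
open Matrix

/-! The cross terms `Yᵀ Gᵀ` and `G Y` of the off-diagonal blocks are chosen so that, after
congruence with the injective column `[1; Y]`, they cancel the `-He(G)` block exactly: the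
compression of the block matrix to the range of `[1; Y]` is `Q + He(X N Y)`, and compressions
of negative definite matrices by injective maps are negative definite. -/

namespace Matrix

variable {R : Type*} {m n : Type*} [Fintype n] [DecidableEq n]

theorem mulVec_fromRows_one_injective [Semiring R] (Y : Matrix m n R) :
    Function.Injective (fromRows (1 : Matrix n n R) Y).mulVec := fun v w hvw => by
  simpa [fromRows_mulVec] using congrArg (fun u => u ∘ Sum.inl) hvw

theorem conjTranspose_fromRows_one_mul_fromBlocks_mul_fromRows_one [Fintype m] [Semiring R]
    [StarRing R] (A : Matrix n n R) (B : Matrix n m R) (C : Matrix m n R) (D : Matrix m m R)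
    (Y : Matrix m n R) :
    (fromRows (1 : Matrix n n R) Y)ᴴ * fromBlocks A B C D * fromRows (1 : Matrix n n R) Y =
      A + B * Y + Yᴴ * C + Yᴴ * D * Y := by
  rw [Matrix.mul_assoc, fromBlocks_mul_fromRows, conjTranspose_fromRows_eq_fromCols_conjTranspose,
    fromCols_mul_fromRows]
  simp only [conjTranspose_one, Matrix.one_mul, Matrix.mul_one, Matrix.mul_add, Matrix.mul_assoc]
  abel

end Matrix

theorem stmt_0_general {n p q : ℕ}
    (Q : Matrix (Fin n) (Fin n) ℝ) (N : Matrix (Fin p) (Fin q) ℝ)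
    (X : Matrix (Fin n) (Fin p) ℝ) (Y : Matrix (Fin q) (Fin n) ℝ)
    (G : Matrix (Fin q) (Fin q) ℝ)
    (h : (-(fromBlocks Q (X * N + Yᵀ * Gᵀ) (Nᵀ * Xᵀ + G * Y) (-(G + Gᵀ)))).PosDef) :
    (-(Q + (X * N * Y + (X * N * Y)ᵀ))).PosDef := by
  have hcompr := h.conjTranspose_mul_mul_same (mulVec_fromRows_one_injective Y)
  rw [Matrix.mul_neg, Matrix.neg_mul,
    conjTranspose_fromRows_one_mul_fromBlocks_mul_fromRows_one] at hcompr
  convert hcompr using 2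
  simp only [conjTranspose_eq_transpose_of_trivial, transpose_mul, Matrix.mul_add, Matrix.add_mul,
    Matrix.mul_neg, Matrix.neg_mul, Matrix.mul_assoc]
  abel

/-- Convex overbounding sufficient condition: if the block matrix
`[[Q, X N + Yᵀ Gᵀ], [Nᵀ Xᵀ + G Y, −He(G)]]` is negative definite (with `He(G) ≻ 0`),
then `Q + He(X N Y) ≺ 0`. -/
theorem stmt_0 {n p q : ℕ}
    (Q : Matrix (Fin n) (Fin n) ℝ) (N : Matrix (Fin p) (Fin q) ℝ)
    (X : Matrix (Fin n) (Fin p) ℝ) (Y : Matrix (Fin q) (Fin n) ℝ)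
    (G : Matrix (Fin q) (Fin q) ℝ)
    (hQ : Q.IsSymm) (hG : (G + Gᵀ).PosDef)
    (h : (-(fromBlocks Q (X * N + Yᵀ * Gᵀ) (Nᵀ * Xᵀ + G * Y) (-(G + Gᵀ)))).PosDef) :
    (-(Q + (X * N * Y + (X * N * Y)ᵀ))).PosDef :=
  stmt_0_general Q N X Y G h
end

section
/- Let A, B, C be real matrices of sizes n×n, n×m, l×n respectively, P a symmetric positive definite n×n matrix, and Q ∈ Sˡ, S ∈ ℝˡˣᵐ, R ∈ Sᵐ. Suppose the block matrix [[AᵀP + PA − CᵀQC, PB − CᵀS], [BᵀP − SᵀC, −R]] is negative semidefinite. Then for the LTI system ẋ = Ax + Bu, y = Cx with x(0) = x₀, and for every T > 0 and every input u, the dissipation inequality ∫₀ᵀ (yᵀQy + 2yᵀSu + uᵀRu) dt ≥ −x₀ᵀPx₀ holds. -/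
/-!
Along a trajectory, the storage `V = xᵀPx` has derivative `(Ax + Bu)ᵀPx + xᵀP(Ax + Bu)`, and the
quadratic form of the LMI matrix at `(x, u)` is exactly the supply rate minus this derivative. So
`dV/dt` is bounded by the supply rate pointwise; integrating over `[0, T]` and using `V(T) ≥ 0`
gives the dissipation inequality.
-/

open Matrix MeasureTheory

theorem HasDerivAt.dotProduct {𝕜 ι : Type*} [NontriviallyNormedField 𝕜] [Fintype ι]
    {x y : 𝕜 → ι → 𝕜} {x' y' : ι → 𝕜} {t : 𝕜}
    (hx : HasDerivAt x x' t) (hy : HasDerivAt y y' t) :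
    HasDerivAt (fun s => x s ⬝ᵥ y s) (x' ⬝ᵥ y t + x t ⬝ᵥ y') t := by
  rw [hasDerivAt_pi] at hx hy
  have h := HasDerivAt.fun_sum (u := Finset.univ) fun i _ => (hx i).fun_mul (hy i)
  rw [Finset.sum_add_distrib] at h
  exact h

theorem HasDerivAt.matrix_mulVec {𝕜 ι κ : Type*} [NontriviallyNormedField 𝕜] [Fintype ι]
    (M : Matrix κ ι 𝕜) {y : 𝕜 → ι → 𝕜} {y' : ι → 𝕜} {t : 𝕜} (hy : HasDerivAt y y' t) :
    HasDerivAt (fun s => M *ᵥ y s) (M *ᵥ y') t :=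
  hasDerivAt_pi.2 fun i => by
    have h := (hasDerivAt_const t (M i)).dotProduct hy
    rwa [zero_dotProduct, zero_add] at h

def qsrSupply {ι κ : Type*} [Fintype ι] [Fintype κ] (Q : Matrix ι ι ℝ) (S : Matrix ι κ ℝ)
    (R : Matrix κ κ ℝ) (y : ι → ℝ) (u : κ → ℝ) : ℝ :=
  y ⬝ᵥ Q *ᵥ y + 2 * (y ⬝ᵥ S *ᵥ u) + u ⬝ᵥ R *ᵥ u

theorem storage_deriv_le_qsrSupply {n m l : Type*} [Fintype n] [Fintype m] [Fintype l]
    {A : Matrix n n ℝ} {B : Matrix n m ℝ} {C : Matrix l n ℝ} {P : Matrix n n ℝ}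
    {Q : Matrix l l ℝ} {S : Matrix l m ℝ} {R : Matrix m m ℝ}
    (hLMI : (-(fromBlocks (Aᵀ * P + P * A - Cᵀ * Q * C) (P * B - Cᵀ * S)
        (Bᵀ * P - Sᵀ * C) (-R))).PosSemidef) (x : n → ℝ) (u : m → ℝ) :
    (A *ᵥ x + B *ᵥ u) ⬝ᵥ P *ᵥ x + x ⬝ᵥ P *ᵥ (A *ᵥ x + B *ᵥ u) ≤ qsrSupply Q S R (C *ᵥ x) u := by
  have h := hLMI.dotProduct_mulVec_nonneg (Sum.elim x u)
  simp only [neg_mulVec, fromBlocks_mulVec, sumElim_dotProduct_sumElim, add_mulVec, sub_mulVec,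
    ← mulVec_mulVec, dotProduct_neg, dotProduct_add, dotProduct_sub,
    dotProduct_transpose_mulVec, star_trivial, Sum.elim_comp_inl, Sum.elim_comp_inr] at h
  simp only [qsrSupply, add_dotProduct, dotProduct_add, mulVec_add]
  linarith [dotProduct_comm (P *ᵥ x) (A *ᵥ x), dotProduct_comm (P *ᵥ x) (B *ᵥ u),
    dotProduct_comm (Q *ᵥ C *ᵥ x) (C *ᵥ x), dotProduct_comm (S *ᵥ u) (C *ᵥ x)]

theorem neg_le_intervalIntegral_of_hasDerivAt_le {V g φ : ℝ → ℝ} {a b : ℝ} (hab : a ≤ b)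
    (hV : ∀ t, HasDerivAt V (g t) t) (hgφ : ∀ t, g t ≤ φ t) (hV_nonneg : ∀ t, 0 ≤ V t) :
    -V a ≤ ∫ t in a..b, φ t := by
  by_cases hφ : IntervalIntegrable φ volume a b
  · have := intervalIntegral.sub_le_integral_of_hasDeriv_right_of_le hab
      (fun t _ => (hV t).continuousAt.continuousWithinAt) (fun t _ => (hV t).hasDerivWithinAt)
      ((intervalIntegrable_iff_integrableOn_Icc_of_le hab).1 hφ) fun t _ => hgφ t
    linarith [hV_nonneg b]
  · rw [intervalIntegral.integral_undef hφ]
    linarith [hV_nonneg a]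

theorem stmt_3_general {n m l : ℕ}
    (A : Matrix (Fin n) (Fin n) ℝ) (B : Matrix (Fin n) (Fin m) ℝ)
    (C : Matrix (Fin l) (Fin n) ℝ)
    (P : Matrix (Fin n) (Fin n) ℝ) (Q : Matrix (Fin l) (Fin l) ℝ)
    (S : Matrix (Fin l) (Fin m) ℝ) (R : Matrix (Fin m) (Fin m) ℝ)
    (hPpd : P.PosDef)
    (hLMI : (-(fromBlocks (Aᵀ * P + P * A - Cᵀ * Q * C) (P * B - Cᵀ * S)
        (Bᵀ * P - Sᵀ * C) (-R))).PosSemidef)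
    (x : ℝ → (Fin n → ℝ)) (u : ℝ → (Fin m → ℝ)) (x₀ : Fin n → ℝ)
    (hx0 : x 0 = x₀)
    (hode : ∀ t, HasDerivAt x (A.mulVec (x t) + B.mulVec (u t)) t)
    (T : ℝ) (hT : 0 < T) :
    (∫ t in (0:ℝ)..T,
        ((C.mulVec (x t)) ⬝ᵥ Q.mulVec (C.mulVec (x t))
          + 2 * ((C.mulVec (x t)) ⬝ᵥ S.mulVec (u t))
          + (u t) ⬝ᵥ R.mulVec (u t))) ≥ -(x₀ ⬝ᵥ P.mulVec x₀) := by
  subst hx0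
  exact neg_le_intervalIntegral_of_hasDerivAt_le hT.le
    (fun t => (hode t).dotProduct ((hode t).matrix_mulVec P))
    (fun t => storage_deriv_le_qsrSupply hLMI (x t) (u t))
    (fun t => hPpd.posSemidef.dotProduct_mulVec_nonneg (x t))

/-- QSR dissipativity of an LTI system from the KYP-type LMI: if
`[[AᵀP + PA − CᵀQC, PB − CᵀS],[BᵀP − SᵀC, −R]] ⪯ 0` with `P ≻ 0`, then along any
trajectory of `ẋ = Ax + Bu`, `y = Cx`, `x(0) = x₀`, the dissipation inequality
`∫₀ᵀ (yᵀQy + 2yᵀSu + uᵀRu) dt ≥ −x₀ᵀPx₀` holds for every `T > 0`. -/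
theorem stmt_3 {n m l : ℕ}
    (A : Matrix (Fin n) (Fin n) ℝ) (B : Matrix (Fin n) (Fin m) ℝ)
    (C : Matrix (Fin l) (Fin n) ℝ)
    (P : Matrix (Fin n) (Fin n) ℝ) (Q : Matrix (Fin l) (Fin l) ℝ)
    (S : Matrix (Fin l) (Fin m) ℝ) (R : Matrix (Fin m) (Fin m) ℝ)
    (hP : P.IsSymm) (hPpd : P.PosDef) (hQ : Q.IsSymm) (hR : R.IsSymm)
    (hLMI : (-(fromBlocks (Aᵀ * P + P * A - Cᵀ * Q * C) (P * B - Cᵀ * S)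
        (Bᵀ * P - Sᵀ * C) (-R))).PosSemidef)
    (x : ℝ → (Fin n → ℝ)) (u : ℝ → (Fin m → ℝ)) (x₀ : Fin n → ℝ)
    (hx0 : x 0 = x₀)
    (hode : ∀ t, HasDerivAt x (A.mulVec (x t) + B.mulVec (u t)) t)
    (T : ℝ) (hT : 0 < T) :
    (∫ t in (0:ℝ)..T,
        ((C.mulVec (x t)) ⬝ᵥ Q.mulVec (C.mulVec (x t))
          + 2 * ((C.mulVec (x t)) ⬝ᵥ S.mulVec (u t))
          + (u t) ⬝ᵥ R.mulVec (u t))) ≥ -(x₀ ⬝ᵥ P.mulVec x₀) :=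
  stmt_3_general A B C P Q S R hPpd hLMI x u x₀ hx0 hode T hT
end

section
/- Let Q ∈ Sⁿ, and X ∈ ℝⁿˣᵖ, N ∈ ℝᵖˣ𝑞, Y ∈ ℝ𝑞ˣⁿ. If the block matrix [[Q, XN + Yᵀ], [NᵀXᵀ + Y, −2I_q]] is negative semidefinite, then Q + XNY + YᵀNᵀXᵀ ⪯ (1/2)(XN − Yᵀ)(NᵀXᵀ − Y). -/
open Matrix

/-- Conservatism quantification of the overbounding with `G = I`: if
`[[Q, XN + Yᵀ],[NᵀXᵀ + Y, −2I]] ⪯ 0` then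
`Q + XNY + YᵀNᵀXᵀ ⪯ (1/2)(XN − Yᵀ)(NᵀXᵀ − Y)`. -/
theorem stmt_8 {n p q : ℕ}
    (Q : Matrix (Fin n) (Fin n) ℝ) (X : Matrix (Fin n) (Fin p) ℝ)
    (N : Matrix (Fin p) (Fin q) ℝ) (Y : Matrix (Fin q) (Fin n) ℝ)
    (hQ : Q.IsSymm)
    (h : (-(fromBlocks Q (X * N + Yᵀ) (Nᵀ * Xᵀ + Y)
        ((-2 : ℝ) • (1 : Matrix (Fin q) (Fin q) ℝ)))).PosSemidef) :
    ((1/2 : ℝ) • ((X * N - Yᵀ) * (Nᵀ * Xᵀ - Y))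
      - (Q + X * N * Y + Yᵀ * Nᵀ * Xᵀ)).PosSemidef := by
  set C : Matrix (Fin n) (Fin q) ℝ := X * N + Yᵀ with hC
  set B : Matrix (Fin n) (Fin q) ℝ := X * N - Yᵀ with hB
  have hD : ((2 : ℝ) • (1 : Matrix (Fin q) (Fin q) ℝ)).PosDef := by
    have : ((2 : ℝ) • (1 : Matrix (Fin q) (Fin q) ℝ)) = diagonal (fun _ => (2 : ℝ)) := by
      ext i j
      by_cases hij : i = j <;> simp [one_apply, diagonal, hij]
    rw [this]
    exact Matrix.PosDef.diagonal (fun _ => two_pos)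
  have hDinv : ((2 : ℝ) • (1 : Matrix (Fin q) (Fin q) ℝ))⁻¹
      = (1/2 : ℝ) • (1 : Matrix (Fin q) (Fin q) ℝ) := by
    apply Matrix.inv_eq_left_inv
    rw [smul_mul_smul_comm]
    norm_num
  haveI : Invertible ((2 : ℝ) • (1 : Matrix (Fin q) (Fin q) ℝ)) :=
    ⟨(1/2 : ℝ) • (1 : Matrix (Fin q) (Fin q) ℝ),
      by rw [smul_mul_smul_comm]; norm_num,
      by rw [smul_mul_smul_comm]; norm_num⟩
  have h' : (fromBlocks (-Q) (-C) (-C)ᴴ ((2 : ℝ) • (1 : Matrix (Fin q) (Fin q) ℝ))).PosSemidef := by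
    have hCH : (-C)ᴴ = -(Nᵀ * Xᵀ + Y) := by
      simp [hC, conjTranspose_add, conjTranspose_mul]
    rw [hCH]
    have : (fromBlocks (-Q) (-C) (-(Nᵀ * Xᵀ + Y)) ((2 : ℝ) • (1 : Matrix (Fin q) (Fin q) ℝ)))
        = -(fromBlocks Q C (Nᵀ * Xᵀ + Y) ((-2 : ℝ) • (1 : Matrix (Fin q) (Fin q) ℝ))) := by
      rw [Matrix.fromBlocks_neg]
      congr 1
      simp
    rw [this]
    exact h
  rw [Matrix.PosDef.fromBlocks₂₂ _ _ hD] at h'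
  rw [hDinv] at h'
  -- h' : (-Q - (-C) * ((1/2)•1) * (-C)ᴴ).PosSemidef
  have hCH : (-C)ᴴ = -Cᵀ := by
    ext i j; simp
  rw [hCH] at h'
  have e : -Q - -C * ((1/2 : ℝ) • (1 : Matrix (Fin q) (Fin q) ℝ)) * -Cᵀ
      = -Q - (1/2 : ℝ) • (C * Cᵀ) := by
    congr 1
    rw [Matrix.mul_smul, Matrix.smul_mul, Matrix.mul_one]; simp
  rw [e] at h'
  have hS := h'
  have hBB : (B * Bᴴ).PosSemidef := posSemidef_self_mul_conjTranspose B
  have hBH : Bᴴ = Nᵀ * Xᵀ - Y := by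
    simp [hB, conjTranspose_sub, conjTranspose_mul]
  rw [hBH] at hBB
  have key : (1/2 : ℝ) • ((X * N - Yᵀ) * (Nᵀ * Xᵀ - Y))
      - (Q + X * N * Y + Yᵀ * Nᵀ * Xᵀ)
      = (B * (Nᵀ * Xᵀ - Y)) + (-Q - (1/2 : ℝ) • (C * Cᵀ)) := by
    have hCT : Cᵀ = Nᵀ * Xᵀ + Y := by
      simp [hC, transpose_add, transpose_mul]
    rw [hB, hCT, hC]
    simp only [Matrix.sub_mul, Matrix.mul_sub, Matrix.add_mul, Matrix.mul_add,
      smul_sub, smul_add, Matrix.mul_assoc]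
    module
  rw [key]
  exact hBB.add hS
end
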